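/- arXiv:0905.3438 — 2 statements merged into one kernel-verified Lean document; each statement's English description precedes it below -/
import Mathlib

section
/- If C is a closed linear subspace of a real Hilbert space H and F : H → H is firmly nonexpansive, then the map T = P_C ∘ F + (Id − P_C) ∘ (Id − F) is firmly nonexpansive, where P_C is the orthogonal projector onto C. -/
/-!
A map `F` is firmly nonexpansive exactly when its reflected map `2F - Id` is nonexpansive.
Writing `R = 2 P_C - Id` for the reflection across `C`, a direct computation gives
`2T - Id = R ∘ (2F - Id)`; since `R` is an isometry, `2T - Id` is nonexpansive.
-/

open scoped RealInnerProductSpace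

def FirmlyNonexpansive {H : Type*} [NormedAddCommGroup H] [InnerProductSpace ℝ H]
    (F : H → H) : Prop :=
  ∀ x y : H, ⟪F x - F y, x - y⟫ ≥ ‖F x - F y‖ ^ 2

section

variable {H : Type*} [NormedAddCommGroup H] [InnerProductSpace ℝ H]

theorem norm_two_smul_sub_le_norm_iff (w v : H) :
    ‖(2 : ℝ) • w - v‖ ≤ ‖v‖ ↔ ‖w‖ ^ 2 ≤ ⟪w, v⟫ := by
  have expand : ‖(2 : ℝ) • w - v‖ ^ 2 = 4 * ‖w‖ ^ 2 - 4 * ⟪w, v⟫ + ‖v‖ ^ 2 := by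
    rw [norm_sub_sq_real, norm_smul, real_inner_smul_left]
    norm_num
    ring
  rw [← pow_le_pow_iff_left₀ (norm_nonneg _) (norm_nonneg _) two_ne_zero, expand]
  constructor <;> intro h <;> linarith

theorem firmlyNonexpansive_iff_lipschitzWith_reflected (F : H → H) :
    FirmlyNonexpansive F ↔ LipschitzWith 1 (fun x => (2 : ℝ) • F x - x) := by
  have reflected_sub (x y : H) :
      ((2 : ℝ) • F x - x) - ((2 : ℝ) • F y - y) = (2 : ℝ) • (F x - F y) - (x - y) := by
    module
  simp only [lipschitzWith_iff_dist_le_mul, NNReal.coe_one, one_mul, dist_eq_norm,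
    reflected_sub, norm_two_smul_sub_le_norm_iff]
  rfl

theorem two_smul_sub_eq_reflection (C : Submodule ℝ H) [C.HasOrthogonalProjection]
    (w z : H) :
    (2 : ℝ) • ((C.orthogonalProjection w : H) + ((z - w) - (C.orthogonalProjection (z - w) : H))) -
        z =
      C.reflection ((2 : ℝ) • w - z) := by
  simp only [Submodule.reflection_apply, Submodule.coe_orthogonalProjection_apply]
  simp only [map_sub, map_smul]
  module

end

theorem stmt0_general {H : Type*} [NormedAddCommGroup H] [InnerProductSpace ℝ H]
    (C : Submodule ℝ H) [CompleteSpace C] (F : H → H) (hF : FirmlyNonexpansive F) :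
    FirmlyNonexpansive (fun z : H =>
      (C.orthogonalProjection (F z) : H) +
        ((z - F z) - (C.orthogonalProjection (z - F z) : H))) := by
  rw [firmlyNonexpansive_iff_lipschitzWith_reflected] at hF ⊢
  simpa only [one_mul, Function.comp_def, ← two_smul_sub_eq_reflection] using
    C.reflection.isometry.lipschitz.comp hF

/-- If `C` is a closed linear subspace and `F` is firmly nonexpansive, then
`P_C ∘ F + (Id − P_C) ∘ (Id − F)` is firmly nonexpansive. -/
theorem stmt0 {H : Type*} [NormedAddCommGroup H] [InnerProductSpace ℝ H] [CompleteSpace H]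
    (C : Submodule ℝ H) [CompleteSpace C] (F : H → H) (hF : FirmlyNonexpansive F) :
    FirmlyNonexpansive (fun z : H =>
      (C.orthogonalProjection (F z) : H) +
        ((z - F z) - (C.orthogonalProjection (z - F z) : H))) :=
  stmt0_general C F hF
end

section
/- (Demiclosedness principle) Let N : H → H be nonexpansive on a real Hilbert space H, let (z_n) be a sequence converging weakly to z, and suppose z_n − N z_n converges strongly to 0. Then z = N z. -/
/-!
Expanding squares, `‖z n - N z‖² - ‖z n - z‖² → ‖z - N z‖²` by weak convergence alone, while
nonexpansiveness bounds the same quantity by `‖z n - N (z n)‖ (‖z n - N (z n)‖ + 2 ‖z n - z‖)`.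
A weakly convergent sequence is bounded (uniform boundedness), so this bound tends to `0`.
-/

open scoped RealInnerProductSpace
open Filter Topology

section InnerProductSpace

variable {H : Type*} [NormedAddCommGroup H] [InnerProductSpace ℝ H]

theorem exists_norm_le_of_tendsto_inner [CompleteSpace H] {z : ℕ → H} {u : H}
    (h : ∀ y : H, Tendsto (fun n => ⟪z n, y⟫) atTop (𝓝 ⟪u, y⟫)) : ∃ C, ∀ n, ‖z n‖ ≤ C := by
  obtain ⟨C, hC⟩ := banach_steinhaus (g := fun n => innerSL ℝ (z n)) fun y => by
    obtain ⟨C, hC⟩ := (h y).norm.bddAbove_range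
    exact ⟨C, fun n => hC ⟨n, rfl⟩⟩
  exact ⟨C, fun n => by simpa only [innerSL_apply_norm] using hC n⟩

theorem tendsto_norm_sub_sq_sub_norm_sub_sq {z : ℕ → H} {u : H}
    (h : ∀ y : H, Tendsto (fun n => ⟪z n, y⟫) atTop (𝓝 ⟪u, y⟫)) (w : H) :
    Tendsto (fun n => ‖z n - w‖ ^ 2 - ‖z n - u‖ ^ 2) atTop (𝓝 (‖u - w‖ ^ 2)) := by
  have expand : ∀ n, ‖z n - w‖ ^ 2 - ‖z n - u‖ ^ 2 =
      ‖u - w‖ ^ 2 + 2 * (⟪z n, u - w⟫ - ⟪u, u - w⟫) := fun n => by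
    rw [show z n - w = (z n - u) + (u - w) by abel, norm_add_sq_real, inner_sub_left]
    ring
  simp only [expand]
  simpa using (((h (u - w)).sub_const ⟪u, u - w⟫).const_mul 2).const_add (‖u - w‖ ^ 2)

end InnerProductSpace

theorem sq_norm_sub_map_sub_sq_norm_sub_le {E : Type*} [SeminormedAddCommGroup E] {N : E → E}
    (hN : ∀ x y : E, ‖N x - N y‖ ≤ ‖x - y‖) (x u : E) :
    ‖x - N u‖ ^ 2 - ‖x - u‖ ^ 2 ≤ ‖x - N x‖ * (‖x - N x‖ + 2 * ‖x - u‖) := by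
  have h : ‖x - N u‖ ≤ ‖x - N x‖ + ‖x - u‖ :=
    (norm_sub_le_norm_sub_add_norm_sub _ _ _).trans (by gcongr; exact hN x u)
  nlinarith [norm_nonneg (x - N u), norm_nonneg (x - u)]

/-- Demiclosedness principle: if `N` is nonexpansive, `z_n ⇀ z` weakly and
`z_n − N z_n → 0` strongly, then `z = N z`. -/
theorem stmt5 {H : Type*} [NormedAddCommGroup H] [InnerProductSpace ℝ H] [CompleteSpace H]
    (N : H → H) (hN : ∀ x y : H, ‖N x - N y‖ ≤ ‖x - y‖)
    (z : ℕ → H) (zlim : H)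
    (hweak : ∀ y : H, Tendsto (fun n => ⟪z n, y⟫) atTop (𝓝 ⟪zlim, y⟫))
    (hstrong : Tendsto (fun n => z n - N (z n)) atTop (𝓝 0)) :
    zlim = N zlim := by
  obtain ⟨C, hC⟩ := exists_norm_le_of_tendsto_inner hweak
  have hd : Tendsto (fun n => ‖z n - N (z n)‖) atTop (𝓝 0) := by simpa using hstrong.norm
  have hbound : Tendsto (fun n => ‖z n - N (z n)‖ * (‖z n - N (z n)‖ + 2 * (C + ‖zlim‖)))
      atTop (𝓝 0) := by
    simpa using hd.mul (hd.add_const _)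
  have hsq : ‖zlim - N zlim‖ ^ 2 ≤ 0 :=
    le_of_tendsto_of_tendsto' (tendsto_norm_sub_sq_sub_norm_sub_sq hweak (N zlim)) hbound
      fun n => (sq_norm_sub_map_sub_sq_norm_sub_le hN (z n) zlim).trans <| by
        gcongr
        exact (norm_sub_le _ _).trans (by gcongr; exact hC n)
  rw [← sub_eq_zero, ← norm_eq_zero, ← pow_eq_zero_iff two_ne_zero]
  exact le_antisymm hsq (sq_nonneg _)
end
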